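/- For every instance of the charging game with T=2 time steps and every price profile p∈ℝ² with p_1 ≤ p_2, there exists a Nash equilibrium s whose welfare W(s) equals the maximum welfare over all strategy profiles (i.e., the price of stability for uniform and ascending prices is 1 for T=2). -/

import Mathlib

/-!
Formalization of the charging game on capacitated energy networks.

An instance consists of a finite directed host graph `H = (V, E)`, `T` time steps
(with per-time-step edge capacities `κE` and demands `d`), and a finite set `B` of
battery agents, each located at a node `loc b`, with battery edges `(b_t, b_{t+1})`
of capacity `κB b t`.
-/

structure ChargingGame where
  /-- households/vertices of the host graph -/
  V : Type
  fintypeV : Fintype V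
  decV : DecidableEq V
  /-- number of time steps (time steps are indexed by `Fin T`) -/
  T : ℕ
  T_pos : 0 < T
  /-- directed edges (power lines) of the host graph -/
  E : Finset (V × V)
  /-- capacity of (the copy of) edge `e` in time step `t` -/
  κE : Fin T → V × V → ℝ
  κE_nonneg : ∀ t e, 0 ≤ κE t e
  /-- demand/supply of node `v` in time step `t` (positive = supply, negative = demand) -/
  d : Fin T → V → ℝ
  /-- the battery agents -/
  B : Type
  fintypeB : Fintype B
  decB : DecidableEq B
  /-- the location of agent `b` -/
  loc : B → V
  /-- capacity of the battery edge `(b_t, b_{t+1})` (only `t` with `t+1 < T` is relevant) -/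
  κB : B → Fin T → ℝ
  κB_nonneg : ∀ b t, 0 ≤ κB b t

attribute [instance] ChargingGame.fintypeV ChargingGame.decV
attribute [instance] ChargingGame.fintypeB ChargingGame.decB

namespace ChargingGame

variable (G : ChargingGame)

/-- Nodes of the time-expanded energy network graph `G`:
grid nodes `(t, v)`, battery nodes `(t, b)`, and `false` = source `x`, `true` = sink `y`. -/
abbrev Node : Type := (Fin G.T × G.V) ⊕ ((Fin G.T × G.B) ⊕ Bool)

/-- the source `x` -/
abbrev source : G.Node := Sum.inr (Sum.inr false)

/-- the sink `y` -/
abbrev sink : G.Node := Sum.inr (Sum.inr true)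

/-- the copy of household node `v` in time step `t` -/
abbrev gridNode (t : Fin G.T) (v : G.V) : G.Node := Sum.inl (t, v)

/-- the battery node `b_t` of agent `b` in time step `t` -/
abbrev batNode (t : Fin G.T) (b : G.B) : G.Node := Sum.inr (Sum.inl (t, b))

/-- The capacities of the graph `G_s` induced by a strategy profile
`s : B → Fin T → ℝ` (`s b t > 0` means agent `b` charges `s b t` in step `t`,
`s b t < 0` means she discharges `-(s b t)`).  Non-edges have capacity `0`. -/
def cap (s : G.B → Fin G.T → ℝ) : G.Node → G.Node → ℝ
  | Sum.inl (t, v), Sum.inl (t', v') =>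
      if t = t' ∧ (v, v') ∈ G.E then G.κE t (v, v') else 0
  | Sum.inl (t, v), Sum.inr (Sum.inl (t', b)) =>
      if t = t' ∧ G.loc b = v then max 0 (s b t') else 0
  | Sum.inr (Sum.inl (t, b)), Sum.inl (t', v) =>
      if t = t' ∧ G.loc b = v then max 0 (-(s b t)) else 0
  | Sum.inr (Sum.inl (t, b)), Sum.inr (Sum.inl (t', b')) =>
      if b = b' ∧ (t' : ℕ) = (t : ℕ) + 1 then G.κB b t else 0
  | Sum.inr (Sum.inr false), Sum.inl (t, v) => max 0 (G.d t v)
  | Sum.inl (t, v), Sum.inr (Sum.inr true) => max 0 (-(G.d t v))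
  | _, _ => 0

/-- A feasible flow on the node set of `G` with capacities `c`. -/
structure IsFlow (c : G.Node → G.Node → ℝ) (f : G.Node → G.Node → ℝ) : Prop where
  nonneg : ∀ u v, 0 ≤ f u v
  le_cap : ∀ u v, f u v ≤ c u v
  conserve : ∀ n, n ≠ G.source → n ≠ G.sink → (∑ u, f u n) = (∑ w, f n w)

/-- The value `|f|` of a flow: total flow leaving the source. -/
def value (f : G.Node → G.Node → ℝ) : ℝ := ∑ v, f G.source v

/-- `f` is a maximum flow for capacities `c`. -/
def IsMaxFlow (c : G.Node → G.Node → ℝ) (f : G.Node → G.Node → ℝ) : Prop :=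
  G.IsFlow c f ∧ ∀ g, G.IsFlow c g → G.value g ≤ G.value f

/-- Agent `b`'s strategy is admissible for the profile `s`:
every maximum flow in `G_s` saturates both transaction edges of `b` in every time step. -/
def Admissible (s : G.B → Fin G.T → ℝ) (b : G.B) : Prop :=
  ∀ f, G.IsMaxFlow (G.cap s) f → ∀ t : Fin G.T,
    f (G.gridNode t (G.loc b)) (G.batNode t b)
        = G.cap s (G.gridNode t (G.loc b)) (G.batNode t b) ∧
    f (G.batNode t b) (G.gridNode t (G.loc b))
        = G.cap s (G.batNode t b) (G.gridNode t (G.loc b))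

/-- A valid strategy of agent `b`: all prefix sums lie between `0` and the battery
capacity (for every `t` with `t + 1 < T`, i.e. `t ∈ [T-1]` in 1-based indexing). -/
def ValidStrategy (b : G.B) (sb : Fin G.T → ℝ) : Prop :=
  ∀ t : Fin G.T, (t : ℕ) + 1 < G.T →
    0 ≤ (∑ z ∈ Finset.Iic t, sb z) ∧ (∑ z ∈ Finset.Iic t, sb z) ≤ G.κB b t

/-- A valid strategy profile. -/
def ValidProfile (s : G.B → Fin G.T → ℝ) : Prop := ∀ b, G.ValidStrategy b (s b)

open scoped Classical in
/-- The utility of agent `b` under price profile `p` and strategy profile `s`: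
`-∑ t, s b t * p t` if `b`'s strategy is admissible, and `-∞` otherwise. -/
noncomputable def utility (p : Fin G.T → ℝ) (s : G.B → Fin G.T → ℝ) (b : G.B) : EReal :=
  if G.Admissible s b then ((-(∑ t, s b t * p t) : ℝ) : EReal) else ⊥

/-- `s` is a (pure) Nash equilibrium for the price profile `p`. -/
def IsNash (p : Fin G.T → ℝ) (s : G.B → Fin G.T → ℝ) : Prop :=
  G.ValidProfile s ∧
  ∀ b (sb' : Fin G.T → ℝ), G.ValidStrategy b sb' →
    ¬ G.utility p s b < G.utility p (Function.update s b sb') b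

/-- `s` is a `k`-strong equilibrium for the price profile `p`: no nonempty coalition of
at most `k` agents has a joint deviation strictly improving the utility of each member. -/
def IsStrongEq (k : ℕ) (p : Fin G.T → ℝ) (s : G.B → Fin G.T → ℝ) : Prop :=
  G.ValidProfile s ∧
  ∀ C : Finset G.B, C.Nonempty → C.card ≤ k →
    ∀ s' : G.B → Fin G.T → ℝ, (∀ b, G.ValidStrategy b (s' b)) →
      (∀ b ∉ C, s' b = s b) →
      ¬ ∀ b ∈ C, G.utility p s b < G.utility p s' b

/-- The welfare `W(s)` of a strategy profile `s`: the value of a maximum flow in `G_s`. -/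
noncomputable def welfare (s : G.B → Fin G.T → ℝ) : ℝ :=
  sSup {r | ∃ f, G.IsFlow (G.cap s) f ∧ G.value f = r}

/-- The maximum welfare over all (valid) strategy profiles. -/
noncomputable def optWelfare : ℝ :=
  sSup {r | ∃ s, G.ValidProfile s ∧ G.welfare s = r}

end ChargingGame
namespace ChargingGame
variable {G : ChargingGame}

lemma cap_nonneg (s : G.B → Fin G.T → ℝ) (u v : G.Node) : 0 ≤ G.cap s u v := by
  rcases u with ⟨t, w⟩ | ⟨⟨t, b⟩ | (_ | _)⟩ <;>
    rcases v with ⟨t', w'⟩ | ⟨⟨t', b'⟩ | (_ | _)⟩ <;>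
    simp [cap] <;> split_ifs <;>
    first
      | positivity
      | exact G.κE_nonneg _ _
      | exact G.κB_nonneg _ _

def t0 (G : ChargingGame) : Fin G.T := ⟨0, G.T_pos⟩

lemma one_lt_T (G : ChargingGame) (hT : G.T = 2) : 1 < G.T := by omega

def t1 (G : ChargingGame) (hT : G.T = 2) : Fin G.T := ⟨1, one_lt_T G hT⟩

variable {s : G.B → Fin G.T → ℝ} {f : G.Node → G.Node → ℝ}

lemma IsFlow.zero_of_cap (hf : G.IsFlow (G.cap s) f) {u v : G.Node}
    (h : G.cap s u v = 0) : f u v = 0 :=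
  le_antisymm (h ▸ hf.le_cap u v) (hf.nonneg u v)

lemma sum_in_bat0 (hf : G.IsFlow (G.cap s) f) (b : G.B) :
    ∑ u, f u (G.batNode (t0 G) b) = f (G.gridNode (t0 G) (G.loc b)) (G.batNode (t0 G) b) := by
  apply Fintype.sum_eq_single
  rintro (⟨t, w⟩ | ⟨⟨t, b'⟩ | (_ | _)⟩) hu <;>
    apply hf.zero_of_cap <;> simp only [cap]
  · rw [if_neg]
    rintro ⟨h1, h2⟩
    exact hu (by rw [h1, h2])
  · rw [if_neg]
    rintro ⟨h1, h2⟩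
    simp [t0] at h2

lemma sum_out_bat0 (hT : G.T = 2) (hf : G.IsFlow (G.cap s) f) (b : G.B) :
    ∑ w, f (G.batNode (t0 G) b) w
      = f (G.batNode (t0 G) b) (G.gridNode (t0 G) (G.loc b))
        + f (G.batNode (t0 G) b) (G.batNode (t1 G hT) b) := by
  rw [Fintype.sum_sum_type, Fintype.sum_sum_type]
  have h1 : ∑ a : Fin G.T × G.V, f (G.batNode (t0 G) b) (Sum.inl a)
      = f (G.batNode (t0 G) b) (G.gridNode (t0 G) (G.loc b)) := by
    apply Fintype.sum_eq_single
    rintro ⟨t, w⟩ hu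
    apply hf.zero_of_cap
    simp only [cap]
    rw [if_neg]
    rintro ⟨rfl, rfl⟩
    exact hu rfl
  have h2 : ∑ a : Fin G.T × G.B, f (G.batNode (t0 G) b) (Sum.inr (Sum.inl a))
      = f (G.batNode (t0 G) b) (G.batNode (t1 G hT) b) := by
    apply Fintype.sum_eq_single
    rintro ⟨t, b'⟩ hu
    apply hf.zero_of_cap
    simp only [cap]
    rw [if_neg]
    rintro ⟨rfl, h⟩
    apply hu
    simp only [t0] at h
    have : t = t1 G hT := by
      apply Fin.ext; simp [t1]; omega
    rw [this]
  have h3 : ∑ c : Bool, f (G.batNode (t0 G) b) (Sum.inr (Sum.inr c)) = 0 := by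
    apply Finset.sum_eq_zero
    intro c _
    apply hf.zero_of_cap
    cases c <;> rfl
  rw [h1, h2, h3]; ring

lemma sum_in_bat1 (hT : G.T = 2) (hf : G.IsFlow (G.cap s) f) (b : G.B) :
    ∑ u, f u (G.batNode (t1 G hT) b)
      = f (G.gridNode (t1 G hT) (G.loc b)) (G.batNode (t1 G hT) b)
        + f (G.batNode (t0 G) b) (G.batNode (t1 G hT) b) := by
  rw [Fintype.sum_sum_type, Fintype.sum_sum_type]
  have h1 : ∑ a : Fin G.T × G.V, f (Sum.inl a) (G.batNode (t1 G hT) b)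
      = f (G.gridNode (t1 G hT) (G.loc b)) (G.batNode (t1 G hT) b) := by
    apply Fintype.sum_eq_single
    rintro ⟨t, w⟩ hu
    apply hf.zero_of_cap
    simp only [cap]
    rw [if_neg]
    rintro ⟨rfl, rfl⟩
    exact hu rfl
  have h2 : ∑ a : Fin G.T × G.B, f (Sum.inr (Sum.inl a)) (G.batNode (t1 G hT) b)
      = f (G.batNode (t0 G) b) (G.batNode (t1 G hT) b) := by
    apply Fintype.sum_eq_single
    rintro ⟨t, b'⟩ hu
    apply hf.zero_of_cap
    simp only [cap]
    rw [if_neg]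
    rintro ⟨rfl, h⟩
    apply hu
    simp only [t1] at h
    have : t = t0 G := by
      apply Fin.ext; simp [t0]; omega
    rw [this]
  have h3 : ∑ c : Bool, f (Sum.inr (Sum.inr c)) (G.batNode (t1 G hT) b) = 0 := by
    apply Finset.sum_eq_zero
    intro c _
    apply hf.zero_of_cap
    cases c <;> rfl
  rw [h1, h2, h3]; ring

lemma sum_out_bat1 (hT : G.T = 2) (hf : G.IsFlow (G.cap s) f) (b : G.B) :
    ∑ w, f (G.batNode (t1 G hT) b) w
      = f (G.batNode (t1 G hT) b) (G.gridNode (t1 G hT) (G.loc b)) := by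
  apply Fintype.sum_eq_single
  rintro (⟨t, w⟩ | ⟨⟨t, b'⟩ | (_ | _)⟩) hu <;>
    apply hf.zero_of_cap <;> simp only [cap]
  · rw [if_neg]
    rintro ⟨rfl, rfl⟩
    exact hu rfl
  · rw [if_neg]
    rintro ⟨rfl, h⟩
    simp only [t1] at h
    omega

lemma batNode_ne_source (t : Fin G.T) (b : G.B) : G.batNode t b ≠ G.source := by
  simp [batNode, source]

lemma batNode_ne_sink (t : Fin G.T) (b : G.B) : G.batNode t b ≠ G.sink := by
  simp [batNode, sink]

lemma balance0 (hT : G.T = 2) (hf : G.IsFlow (G.cap s) f) (b : G.B) :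
    f (G.gridNode (t0 G) (G.loc b)) (G.batNode (t0 G) b)
      = f (G.batNode (t0 G) b) (G.gridNode (t0 G) (G.loc b))
        + f (G.batNode (t0 G) b) (G.batNode (t1 G hT) b) := by
  have h := hf.conserve (G.batNode (t0 G) b) (batNode_ne_source _ _) (batNode_ne_sink _ _)
  rwa [sum_in_bat0 hf b, sum_out_bat0 hT hf b] at h

lemma balance1 (hT : G.T = 2) (hf : G.IsFlow (G.cap s) f) (b : G.B) :
    f (G.gridNode (t1 G hT) (G.loc b)) (G.batNode (t1 G hT) b)
      + f (G.batNode (t0 G) b) (G.batNode (t1 G hT) b)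
      = f (G.batNode (t1 G hT) b) (G.gridNode (t1 G hT) (G.loc b)) := by
  have h := hf.conserve (G.batNode (t1 G hT) b) (batNode_ne_source _ _) (batNode_ne_sink _ _)
  rwa [sum_in_bat1 hT hf b, sum_out_bat1 hT hf b] at h

lemma ch1_zero (hT : G.T = 2) (hf : G.IsFlow (G.cap s) f) (b : G.B) :
    f (G.gridNode (t1 G hT) (G.loc b)) (G.batNode (t1 G hT) b) = 0 := by
  rcases le_or_gt (s b (t1 G hT)) 0 with h | h
  · apply hf.zero_of_cap
    simp [cap, max_eq_left h]
  · have hb := balance1 hT hf b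
    have h1 : f (G.batNode (t1 G hT) b) (G.gridNode (t1 G hT) (G.loc b)) ≤ 0 := by
      have := hf.le_cap (G.batNode (t1 G hT) b) (G.gridNode (t1 G hT) (G.loc b))
      simpa [cap, max_eq_left (neg_nonpos.mpr h.le)] using this
    have h2 := hf.nonneg (G.gridNode (t1 G hT) (G.loc b)) (G.batNode (t1 G hT) b)
    have h3 := hf.nonneg (G.batNode (t0 G) b) (G.batNode (t1 G hT) b)
    linarith

lemma Iic_t0 : Finset.Iic (t0 G) = {t0 G} := by
  ext z
  simp [Finset.mem_Iic, Fin.le_def, t0, Fin.ext_iff]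

lemma valid_t0 (hT : G.T = 2) {b : G.B} {sb : Fin G.T → ℝ} (hv : G.ValidStrategy b sb) :
    0 ≤ sb (t0 G) ∧ sb (t0 G) ≤ G.κB b (t0 G) := by
  have h := hv (t0 G) (by simp only [t0]; omega)
  rwa [Iic_t0, Finset.sum_singleton] at h

lemma dis0_zero (hT : G.T = 2) (hf : G.IsFlow (G.cap s) f) {b : G.B}
    (hs : 0 ≤ s b (t0 G)) :
    f (G.batNode (t0 G) b) (G.gridNode (t0 G) (G.loc b)) = 0 := by
  apply hf.zero_of_cap
  simp [cap, max_eq_left (neg_nonpos.mpr hs)]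

lemma fin_two (hT : G.T = 2) (t : Fin G.T) : t = t0 G ∨ t = t1 G hT := by
  have ht := t.isLt
  have ht2 : (t : ℕ) < 2 := hT ▸ ht
  rcases (by omega : (t : ℕ) = 0 ∨ (t : ℕ) = 1) with h | h
  · exact Or.inl (Fin.ext h)
  · exact Or.inr (Fin.ext h)

def prof (G : ChargingGame) (x : G.B → ℝ) : G.B → Fin G.T → ℝ :=
  fun b t => if t = t0 G then x b else -(x b)

lemma bat_eq_ch0 (hT : G.T = 2) (hf : G.IsFlow (G.cap s) f) {b : G.B}
    (hs : 0 ≤ s b (t0 G)) :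
    f (G.batNode (t0 G) b) (G.batNode (t1 G hT) b)
      = f (G.gridNode (t0 G) (G.loc b)) (G.batNode (t0 G) b) := by
  have h2 := balance0 hT hf b
  rw [dis0_zero hT hf hs] at h2
  linarith

lemma dis1_eq_ch0 (hT : G.T = 2) (hf : G.IsFlow (G.cap s) f) {b : G.B}
    (hs : 0 ≤ s b (t0 G)) :
    f (G.batNode (t1 G hT) b) (G.gridNode (t1 G hT) (G.loc b))
      = f (G.gridNode (t0 G) (G.loc b)) (G.batNode (t0 G) b) := by
  have h1 := balance1 hT hf b
  rw [ch1_zero hT hf b, bat_eq_ch0 hT hf hs] at h1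
  linarith

/-- The charge amount of battery `b` at time 0 under flow `f`. -/
def xOf (G : ChargingGame) (f : G.Node → G.Node → ℝ) (b : G.B) : ℝ :=
  f (G.gridNode (t0 G) (G.loc b)) (G.batNode (t0 G) b)

lemma xOf_mem (hT : G.T = 2) (hs : G.ValidProfile s) (hf : G.IsFlow (G.cap s) f) (b : G.B) :
    0 ≤ xOf G f b ∧ xOf G f b ≤ G.κB b (t0 G) := by
  refine ⟨hf.nonneg _ _, ?_⟩
  have h1 := hf.le_cap (G.gridNode (t0 G) (G.loc b)) (G.batNode (t0 G) b)
  have h2 := (valid_t0 hT (hs b)).1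
  have h3 := (valid_t0 hT (hs b)).2
  simp only [cap, if_pos (And.intro rfl rfl), max_eq_right h2] at h1
  exact le_trans h1 h3

lemma transfer (hT : G.T = 2) (hs : G.ValidProfile s) (hf : G.IsFlow (G.cap s) f) :
    G.IsFlow (G.cap (prof G (xOf G f))) f := by
  refine ⟨hf.nonneg, ?_, hf.conserve⟩
  intro u v
  rcases u with ⟨t, w⟩ | ⟨⟨t, b⟩ | c⟩ <;> rcases v with ⟨t', w'⟩ | ⟨⟨t', b'⟩ | c'⟩
  · exact hf.le_cap _ _
  · -- charge edge
    simp only [cap]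
    split_ifs with h
    · obtain ⟨rfl, rfl⟩ := h
      rcases fin_two hT t with rfl | rfl
      · simp only [prof, if_pos rfl]
        exact le_max_right _ _
      · rw [ch1_zero hT hf b']
        exact le_max_left _ _
    · have : G.cap s (Sum.inl (t, w)) (Sum.inr (Sum.inl (t', b'))) = 0 := by
        simp only [cap, if_neg h]
      rw [hf.zero_of_cap this]
  · cases c' <;> exact hf.le_cap _ _
  · -- discharge edge
    simp only [cap]
    split_ifs with h
    · obtain ⟨rfl, rfl⟩ := h
      rcases fin_two hT t with rfl | rfl
      · rw [dis0_zero hT hf (valid_t0 hT (hs b)).1]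
        exact le_max_left _ _
      · rw [dis1_eq_ch0 hT hf (valid_t0 hT (hs b)).1]
        simp only [prof, t1, t0]
        simp only [Fin.mk.injEq, one_ne_zero, ↓reduceIte, neg_neg]
        exact le_max_right _ _
    · have : G.cap s (Sum.inr (Sum.inl (t, b))) (Sum.inl (t', w')) = 0 := by
        simp only [cap, if_neg h]
      rw [hf.zero_of_cap this]
  · exact hf.le_cap _ _
  · cases c' <;> exact hf.le_cap _ _
  · cases c <;> exact hf.le_cap _ _
  · cases c <;> exact hf.le_cap _ _
  · cases c <;> cases c' <;> exact hf.le_cap _ _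

lemma cont_eval (u v : G.Node) : Continuous fun f : G.Node → G.Node → ℝ => f u v :=
  (continuous_apply v).comp (continuous_apply u)

lemma isClosed_flows (c : G.Node → G.Node → ℝ) :
    IsClosed {f : G.Node → G.Node → ℝ | G.IsFlow c f} := by
  have : {f : G.Node → G.Node → ℝ | G.IsFlow c f} =
      (⋂ u, ⋂ v, {f : G.Node → G.Node → ℝ | 0 ≤ f u v}) ∩
      ((⋂ u, ⋂ v, {f : G.Node → G.Node → ℝ | f u v ≤ c u v}) ∩
      (⋂ n ∈ {n : G.Node | n ≠ G.source ∧ n ≠ G.sink},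
        {f : G.Node → G.Node → ℝ | ∑ u, f u n = ∑ w, f n w})) := by
    ext f
    simp only [Set.mem_setOf_eq, Set.mem_inter_iff, Set.mem_iInter]
    constructor
    · intro h
      exact ⟨h.nonneg, h.le_cap, fun n hn => h.conserve n hn.1 hn.2⟩
    · rintro ⟨h1, h2, h3⟩
      exact ⟨h1, h2, fun n hn1 hn2 => h3 n ⟨hn1, hn2⟩⟩
  rw [this]
  refine IsClosed.inter ?_ (IsClosed.inter ?_ ?_)
  · exact isClosed_iInter fun u => isClosed_iInter fun v =>
      isClosed_le continuous_const (cont_eval u v)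
  · exact isClosed_iInter fun u => isClosed_iInter fun v =>
      isClosed_le (cont_eval u v) continuous_const
  · refine isClosed_biInter fun n _ => isClosed_eq ?_ ?_
    · exact continuous_finset_sum _ fun u _ => cont_eval u n
    · exact continuous_finset_sum _ fun w _ => cont_eval n w

lemma isCompact_flows {c : G.Node → G.Node → ℝ} (hc : ∀ u v, 0 ≤ c u v) :
    IsCompact {f : G.Node → G.Node → ℝ | G.IsFlow c f} := by
  have hK : IsCompact (Set.univ.pi fun u : G.Node => Set.univ.pi fun v : G.Node =>
      Set.Icc (0 : ℝ) (c u v)) :=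
    isCompact_univ_pi fun u => isCompact_univ_pi fun v => isCompact_Icc
  refine hK.of_isClosed_subset (isClosed_flows c) ?_
  intro f hf
  refine Set.mem_univ_pi.mpr fun u => Set.mem_univ_pi.mpr fun v => ?_
  exact ⟨hf.nonneg u v, hf.le_cap u v⟩

lemma cont_value : Continuous fun f : G.Node → G.Node → ℝ => G.value f :=
  continuous_finset_sum _ fun v _ => cont_eval G.source v

lemma zero_isFlow (s : G.B → Fin G.T → ℝ) : G.IsFlow (G.cap s) (fun _ _ => 0) :=
  ⟨fun _ _ => le_rfl, fun u v => cap_nonneg s u v, fun _ _ _ => by simp⟩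

lemma exists_maxflow (s : G.B → Fin G.T → ℝ) : ∃ f, G.IsMaxFlow (G.cap s) f := by
  obtain ⟨f, hf, hmax⟩ := (isCompact_flows (cap_nonneg s)).exists_isMaxOn
    ⟨fun _ _ => 0, zero_isFlow s⟩ cont_value.continuousOn
  exact ⟨f, hf, fun g hg => hmax hg⟩

lemma cont_cap (u v : G.Node) : Continuous fun x : G.B → ℝ => G.cap (prof G x) u v := by
  rcases u with ⟨t, w⟩ | ⟨⟨t, b⟩ | (_ | _)⟩ <;> rcases v with ⟨t', w'⟩ | ⟨⟨t', b'⟩ | (_ | _)⟩ <;>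
    simp only [cap, prof] <;>
    (try exact continuous_const) <;>
    split_ifs <;>
    first
      | exact continuous_const
      | exact continuous_const.max (continuous_apply _)
      | exact continuous_const.max (continuous_apply _).neg
      | exact continuous_const.max (continuous_apply _).neg.neg

lemma cap_prof_mono (hT : G.T = 2) {x y : G.B → ℝ} (h0 : ∀ b, 0 ≤ x b)
    (hxy : ∀ b, x b ≤ y b) (u v : G.Node) :
    G.cap (prof G x) u v ≤ G.cap (prof G y) u v := by
  have h0y : ∀ b, 0 ≤ y b := fun b => le_trans (h0 b) (hxy b)
  rcases u with ⟨t, w⟩ | ⟨⟨t, b⟩ | (_ | _)⟩ <;> rcases v with ⟨t', w'⟩ | ⟨⟨t', b'⟩ | (_ | _)⟩ <;>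
    (try exact le_rfl) <;>
    simp only [cap, prof] <;> split_ifs <;>
    first
      | exact le_rfl
      | exact max_le_max le_rfl (hxy _)
      | (rw [neg_neg, neg_neg]; exact max_le_max le_rfl (hxy _))
      | (rw [max_eq_left (neg_nonpos.mpr (h0 _)), max_eq_left (neg_nonpos.mpr (h0y _))])

/-- Pairs of a parameter vector in the battery box together with a feasible flow. -/
def Sset (G : ChargingGame) : Set ((G.B → ℝ) × (G.Node → G.Node → ℝ)) :=
  {q | (∀ b, 0 ≤ q.1 b ∧ q.1 b ≤ G.κB b (t0 G)) ∧ G.IsFlow (G.cap (prof G q.1)) q.2}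

lemma isCompact_Sset (hT : G.T = 2) : IsCompact (Sset G) := by
  have hK : IsCompact ((Set.univ.pi fun b : G.B => Set.Icc (0 : ℝ) (G.κB b (t0 G))) ×ˢ
      (Set.univ.pi fun u : G.Node => Set.univ.pi fun v : G.Node =>
        Set.Icc (0 : ℝ) (G.cap (prof G fun b => G.κB b (t0 G)) u v))) :=
    (isCompact_univ_pi fun b => isCompact_Icc).prod
      (isCompact_univ_pi fun u => isCompact_univ_pi fun v => isCompact_Icc)
  refine hK.of_isClosed_subset ?_ ?_
  · have : Sset G =
        (⋂ b, {q : (G.B → ℝ) × (G.Node → G.Node → ℝ) | 0 ≤ q.1 b}) ∩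
        ((⋂ b, {q : (G.B → ℝ) × (G.Node → G.Node → ℝ) | q.1 b ≤ G.κB b (t0 G)}) ∩
        ((⋂ u, ⋂ v, {q : (G.B → ℝ) × (G.Node → G.Node → ℝ) | 0 ≤ q.2 u v}) ∩
        ((⋂ u, ⋂ v, {q : (G.B → ℝ) × (G.Node → G.Node → ℝ) |
            q.2 u v ≤ G.cap (prof G q.1) u v}) ∩
        (⋂ n ∈ {n : G.Node | n ≠ G.source ∧ n ≠ G.sink},
          {q : (G.B → ℝ) × (G.Node → G.Node → ℝ) | ∑ u, q.2 u n = ∑ w, q.2 n w})))) := by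
      ext q
      simp only [Sset, Set.mem_setOf_eq, Set.mem_inter_iff, Set.mem_iInter]
      constructor
      · rintro ⟨h1, h2⟩
        exact ⟨fun b => (h1 b).1, fun b => (h1 b).2, h2.nonneg, h2.le_cap,
          fun n hn => h2.conserve n hn.1 hn.2⟩
      · rintro ⟨h1, h2, h3, h4, h5⟩
        exact ⟨fun b => ⟨h1 b, h2 b⟩, h3, h4, fun n hn1 hn2 => h5 n ⟨hn1, hn2⟩⟩
    rw [this]
    have ce : ∀ u v : G.Node, Continuous fun q : (G.B → ℝ) × (G.Node → G.Node → ℝ) =>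
        q.2 u v := fun u v => (cont_eval u v).comp continuous_snd
    refine IsClosed.inter ?_ (IsClosed.inter ?_ (IsClosed.inter ?_ (IsClosed.inter ?_ ?_)))
    · exact isClosed_iInter fun b => isClosed_le continuous_const
        ((continuous_apply b).comp continuous_fst)
    · exact isClosed_iInter fun b => isClosed_le
        ((continuous_apply b).comp continuous_fst) continuous_const
    · exact isClosed_iInter fun u => isClosed_iInter fun v =>
        isClosed_le continuous_const (ce u v)
    · exact isClosed_iInter fun u => isClosed_iInter fun v =>
        isClosed_le (ce u v) ((cont_cap u v).comp continuous_fst)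
    · refine isClosed_biInter fun n _ => isClosed_eq ?_ ?_
      · exact continuous_finset_sum _ fun u _ => ce u n
      · exact continuous_finset_sum _ fun w _ => ce n w
  · rintro ⟨x, f⟩ ⟨h1, h2⟩
    refine Set.mem_prod.mpr ⟨Set.mem_univ_pi.mpr fun b => ⟨(h1 b).1, (h1 b).2⟩, ?_⟩
    refine Set.mem_univ_pi.mpr fun u => Set.mem_univ_pi.mpr fun v => ?_
    refine ⟨h2.nonneg u v, le_trans (h2.le_cap u v) ?_⟩
    exact cap_prof_mono hT (fun b => (h1 b).1) (fun b => (h1 b).2) u v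

lemma exists_min_opt (hT : G.T = 2) :
    ∃ q₀ ∈ Sset G, (∀ q ∈ Sset G, G.value q.2 ≤ G.value q₀.2) ∧
      (∀ q ∈ Sset G, G.value q.2 = G.value q₀.2 → ∑ b, q₀.1 b ≤ ∑ b, q.1 b) := by
  have hne : (Sset G).Nonempty := by
    refine ⟨⟨fun b => 0, fun _ _ => 0⟩, fun b => ⟨le_rfl, G.κB_nonneg b _⟩, ?_⟩
    exact zero_isFlow _
  obtain ⟨q₁, hq₁, hmax⟩ := (isCompact_Sset hT).exists_isMaxOn hne
    (cont_value.comp continuous_snd).continuousOn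
  set D := {q ∈ Sset G | G.value q.2 = G.value q₁.2} with hD
  have hDc : IsCompact D := by
    refine (isCompact_Sset hT).inter_right ?_
    exact isClosed_eq (cont_value.comp continuous_snd) continuous_const
  obtain ⟨q₀, hq₀, hmin⟩ := hDc.exists_isMinOn ⟨q₁, hq₁, rfl⟩
    (continuous_finset_sum (f := fun b (q : (G.B → ℝ) × (G.Node → G.Node → ℝ)) => q.1 b)
      _ fun b _ => (continuous_apply b).comp continuous_fst).continuousOn
  refine ⟨q₀, hq₀.1, ?_, ?_⟩
  · intro q hq
    rw [hq₀.2]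
    exact hmax hq
  · intro q hq hval
    refine hmin ?_
    exact ⟨hq, by rw [hval, hq₀.2]⟩

lemma cap_ch (s : G.B → Fin G.T → ℝ) (t : Fin G.T) (b : G.B) :
    G.cap s (G.gridNode t (G.loc b)) (G.batNode t b) = max 0 (s b t) := by
  simp [cap]

lemma cap_dis (s : G.B → Fin G.T → ℝ) (t : Fin G.T) (b : G.B) :
    G.cap s (G.batNode t b) (G.gridNode t (G.loc b)) = max 0 (-(s b t)) := by
  simp [cap]

lemma t0_ne_t1 (hT : G.T = 2) : t0 G ≠ t1 G hT := by
  simp [t0, t1, Fin.ext_iff]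

lemma prof_t0 (x : G.B → ℝ) (b : G.B) : prof G x b (t0 G) = x b := if_pos rfl

lemma prof_t1 (hT : G.T = 2) (x : G.B → ℝ) (b : G.B) :
    prof G x b (t1 G hT) = -(x b) := if_neg (Ne.symm (t0_ne_t1 hT))

lemma prof_valid (hT : G.T = 2) {x : G.B → ℝ}
    (hx : ∀ b, 0 ≤ x b ∧ x b ≤ G.κB b (t0 G)) : G.ValidProfile (prof G x) := by
  intro b t ht
  have htt : t = t0 G := by
    rcases fin_two hT t with rfl | rfl
    · rfl
    · simp only [t1] at ht; omega
  subst htt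
  rw [Iic_t0, Finset.sum_singleton, prof_t0]
  exact hx b

lemma welfare_eq {s : G.B → Fin G.T → ℝ} {f : G.Node → G.Node → ℝ}
    (hf : G.IsMaxFlow (G.cap s) f) : G.welfare s = G.value f := by
  have hub : G.value f ∈ upperBounds {r | ∃ g, G.IsFlow (G.cap s) g ∧ G.value g = r} := by
    rintro r ⟨g, hg, rfl⟩
    exact hf.2 g hg
  unfold welfare
  apply le_antisymm
  · exact csSup_le ⟨G.value f, f, hf.1, rfl⟩ hub
  · exact le_csSup ⟨G.value f, hub⟩ ⟨f, hf.1, rfl⟩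

lemma sum_two (hT : G.T = 2) (F : Fin G.T → ℝ) : ∑ t, F t = F (t0 G) + F (t1 G hT) := by
  have huniv : (Finset.univ : Finset (Fin G.T)) = {t0 G, t1 G hT} := by
    ext t
    simp only [Finset.mem_univ, Finset.mem_insert, Finset.mem_singleton, true_iff]
    exact fin_two hT t
  rw [huniv, Finset.sum_insert (by simp [t0_ne_t1 hT]), Finset.sum_singleton]

end ChargingGame

open ChargingGame

/-- For every instance with `T = 2` time steps and every price profile with
`p 1 ≤ p 2`, there exists a Nash equilibrium whose welfare equals the maximum welfare
over all strategy profiles (i.e. the price of stability for uniform and ascending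
prices is `1` for `T = 2`). -/
theorem pos_one_for_nondecreasing_two_steps (G : ChargingGame) (hT : G.T = 2)
    (p : Fin G.T → ℝ) (hp : p ⟨0, by omega⟩ ≤ p ⟨1, by omega⟩) :
    ∃ s : G.B → Fin G.T → ℝ, G.IsNash p s ∧ G.welfare s = G.optWelfare := by
  classical
  obtain ⟨q₀, hq₀S, hmax, hmin⟩ := exists_min_opt (G := G) hT
  obtain ⟨hbox, hflow⟩ := hq₀S
  set x₀ : G.B → ℝ := q₀.1 with hx₀
  set f₀ := q₀.2 with hf₀def
  have hp' : p (t0 G) ≤ p (t1 G hT) := hp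
  have hvalid : G.ValidProfile (prof G x₀) := prof_valid hT hbox
  have hub : ∀ s, G.ValidProfile s → ∀ g, G.IsFlow (G.cap s) g → G.value g ≤ G.value f₀ := by
    intro s hs g hg
    have h : G.value (⟨xOf G g, g⟩ : (G.B → ℝ) × (G.Node → G.Node → ℝ)).2 ≤ G.value q₀.2 :=
      hmax ⟨xOf G g, g⟩ ⟨fun b => xOf_mem hT hs hg b, transfer hT hs hg⟩
    exact h
  have hwle : ∀ s, G.ValidProfile s → G.welfare s ≤ G.value f₀ := by
    intro s hs
    show sSup _ ≤ _
    refine csSup_le ⟨G.value (fun _ _ => 0), fun _ _ => 0, zero_isFlow s, rfl⟩ ?_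
    rintro r ⟨g, hg, rfl⟩
    exact hub s hs g hg
  have hmaxf₀ : G.IsMaxFlow (G.cap (prof G x₀)) f₀ := ⟨hflow, fun g hg => hub _ hvalid g hg⟩
  have hwelf : G.welfare (prof G x₀) = G.value f₀ := welfare_eq hmaxf₀
  have hsat : ∀ f, G.IsMaxFlow (G.cap (prof G x₀)) f → ∀ b, xOf G f b = x₀ b := by
    intro f hf
    have hval : G.value f = G.value f₀ := le_antisymm (hub _ hvalid f hf.1) (hf.2 f₀ hflow)
    have hle : ∀ b, xOf G f b ≤ x₀ b := by
      intro b
      have h := hf.1.le_cap (G.gridNode (t0 G) (G.loc b)) (G.batNode (t0 G) b)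
      rwa [cap_ch, prof_t0, max_eq_right (hbox b).1] at h
    by_contra hcon
    push_neg at hcon
    obtain ⟨b, hb⟩ := hcon
    have hsum : ∑ b, x₀ b ≤ ∑ b, xOf G f b :=
      hmin ⟨xOf G f, f⟩ ⟨fun b => xOf_mem hT hvalid hf.1 b, transfer hT hvalid hf.1⟩ hval
    have hlt : ∑ b, xOf G f b < ∑ b, x₀ b :=
      Finset.sum_lt_sum (fun i _ => hle i) ⟨b, Finset.mem_univ b, lt_of_le_of_ne (hle b) hb⟩
    linarith
  have hadm : ∀ b, G.Admissible (prof G x₀) b := by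
    intro b f hf t
    have h0 : (0:ℝ) ≤ prof G x₀ b (t0 G) := by rw [prof_t0]; exact (hbox b).1
    rcases fin_two hT t with rfl | rfl
    · constructor
      · rw [cap_ch, prof_t0, max_eq_right (hbox b).1]
        exact hsat f hf b
      · rw [cap_dis, prof_t0, max_eq_left (neg_nonpos.mpr (hbox b).1)]
        exact dis0_zero hT hf.1 h0
    · constructor
      · rw [cap_ch, prof_t1 hT, max_eq_left (neg_nonpos.mpr (hbox b).1)]
        exact ch1_zero hT hf.1 b
      · rw [cap_dis, prof_t1 hT, neg_neg, max_eq_right (hbox b).1,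
          dis1_eq_ch0 hT hf.1 h0]
        exact hsat f hf b
  have hadmU : ∀ b, G.utility p (prof G x₀) b
      = ((x₀ b * (p (t1 G hT) - p (t0 G)) : ℝ) : EReal) := by
    intro b
    unfold ChargingGame.utility
    rw [if_pos (hadm b)]
    have hs : ∑ t, prof G x₀ b t * p t = -(x₀ b * (p (t1 G hT) - p (t0 G))) := by
      rw [sum_two hT (fun t => prof G x₀ b t * p t), prof_t0, prof_t1 hT]
      ring
    rw [hs, neg_neg]
  refine ⟨prof G x₀, ⟨hvalid, ?_⟩, ?_⟩
  · intro b sb' hsb'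
    rw [not_lt]
    by_cases hA : G.Admissible (Function.update (prof G x₀) b sb') b
    swap
    · unfold ChargingGame.utility
      rw [if_neg hA]
      exact bot_le
    · set s' := Function.update (prof G x₀) b sb' with hs'def
      have hs'valid : G.ValidProfile s' := by
        intro b'
        by_cases hbb : b' = b
        · subst hbb; rw [hs'def, Function.update_self]; exact hsb'
        · rw [hs'def, Function.update_of_ne hbb]; exact hvalid b'
      obtain ⟨f, hf⟩ := exists_maxflow (G := G) s'
      set a := sb' (t0 G) with ha
      have ha0 : 0 ≤ a := (valid_t0 hT hsb').1
      have haκ : a ≤ G.κB b (t0 G) := (valid_t0 hT hsb').2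
      have hs'b0 : s' b (t0 G) = a := by rw [hs'def, Function.update_self]
      have hch0 := (hA f hf (t0 G)).1
      rw [cap_ch, hs'b0, max_eq_right ha0] at hch0
      have hdis0 : f (G.batNode (t0 G) b) (G.gridNode (t0 G) (G.loc b)) = 0 :=
        dis0_zero hT hf.1 (by rw [hs'b0]; exact ha0)
      have hbat : f (G.batNode (t0 G) b) (G.batNode (t1 G hT) b) = a := by
        have h := balance0 hT hf.1 b
        rw [hch0, hdis0] at h
        linarith
      have hch1 := (hA f hf (t1 G hT)).1
      rw [cap_ch] at hch1
      have hdis1 := (hA f hf (t1 G hT)).2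
      rw [cap_dis] at hdis1
      have hbal1 := balance1 hT hf.1 b
      rw [hch1, hbat, hdis1] at hbal1
      set c := s' b (t1 G hT) with hc
      have hceq : c = -a := by
        rcases le_or_gt c 0 with h | h
        · rw [max_eq_left h, max_eq_right (by linarith : (0:ℝ) ≤ -c)] at hbal1
          linarith
        · rw [max_eq_right h.le, max_eq_left (by linarith : -c ≤ (0:ℝ))] at hbal1
          linarith
      have hsprof : s' = prof G (Function.update x₀ b a) := by
        funext b' t
        by_cases hbb : b' = b
        · subst hbb
          rcases fin_two hT t with rfl | rfl
          · rw [prof_t0, Function.update_self]; exact hs'b0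
          · rw [prof_t1 hT, Function.update_self]; exact hceq
        · rw [hs'def, Function.update_of_ne hbb]
          simp [prof, Function.update_of_ne hbb]
      have halex : a ≤ x₀ b := by
        by_contra hgt
        push_neg at hgt
        set x' := Function.update x₀ b a with hx'def
        have hx'box : ∀ b', 0 ≤ x' b' ∧ x' b' ≤ G.κB b' (t0 G) := by
          intro b'
          by_cases hbb : b' = b
          · subst hbb; rw [hx'def, Function.update_self]; exact ⟨ha0, haκ⟩
          · rw [hx'def, Function.update_of_ne hbb]; exact hbox b'
        have hmono : ∀ u v, G.cap (prof G x₀) u v ≤ G.cap (prof G x') u v := by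
          refine cap_prof_mono hT (fun b' => (hbox b').1) ?_
          intro b'
          by_cases hbb : b' = b
          · subst hbb; rw [hx'def, Function.update_self]; exact hgt.le
          · rw [hx'def, Function.update_of_ne hbb]
        have hflow' : G.IsFlow (G.cap (prof G x')) f₀ :=
          ⟨hflow.nonneg, fun u v => le_trans (hflow.le_cap u v) (hmono u v), hflow.conserve⟩
        have hmaxf₀' : G.IsMaxFlow (G.cap s') f₀ := by
          rw [hsprof]
          refine ⟨hflow', fun g hg => ?_⟩
          have h : G.value (⟨x', g⟩ : (G.B → ℝ) × (G.Node → G.Node → ℝ)).2 ≤ G.value q₀.2 :=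
            hmax ⟨x', g⟩ ⟨hx'box, hg⟩
          exact h
        have hsatb := (hA f₀ hmaxf₀' (t0 G)).1
        rw [cap_ch, hs'b0, max_eq_right ha0] at hsatb
        have hle := hflow.le_cap (G.gridNode (t0 G) (G.loc b)) (G.batNode (t0 G) b)
        rw [cap_ch, prof_t0, max_eq_right (hbox b).1, hsatb] at hle
        linarith
      rw [hadmU b]
      unfold ChargingGame.utility
      rw [if_pos hA]
      have hsum : ∑ t, s' b t * p t = -(a * (p (t1 G hT) - p (t0 G))) := by
        rw [sum_two hT (fun t => s' b t * p t), hs'b0, ← hc, hceq]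
        ring
      rw [hsum, neg_neg, EReal.coe_le_coe_iff]
      have h := mul_le_mul_of_nonneg_right halex
        (by linarith : (0:ℝ) ≤ p (t1 G hT) - p (t0 G))
      linarith
  · rw [hwelf]
    have hub2 : G.value f₀ ∈ upperBounds {r | ∃ s, G.ValidProfile s ∧ G.welfare s = r} := by
      rintro r ⟨s, hs, rfl⟩
      exact hwle s hs
    unfold ChargingGame.optWelfare
    apply le_antisymm
    · exact le_csSup ⟨G.value f₀, hub2⟩ ⟨prof G x₀, hvalid, hwelf⟩
    · exact csSup_le ⟨G.welfare (prof G x₀), prof G x₀, hvalid, rfl⟩ hub2
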